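/- Let V be a ℚ-algebra and let π₀, π₁, …, πₙ be idempotents in V such that πᵢ·πⱼ = 0 whenever i < j. For each i define pᵢ := (1 − ½πₙ)⋯(1 − ½π₍ᵢ₊₁₎) · πᵢ · (1 − ½π₍ᵢ₋₁₎)⋯(1 − ½π₀). Then for every i one has πᵢ·pᵢ·πᵢ = πᵢ and pᵢ·πᵢ·pᵢ = pᵢ. Consequently, setting a := pᵢ·πᵢ and b := πᵢ·pᵢ, one has a·b = pᵢ and b·a = πᵢ, so πᵢ and pᵢ are equivalent idempotents. -/

import Mathlib

/-! With `L = (1 − ½πₙ)⋯(1 − ½π₍ᵢ₊₁₎)` and `R = (1 − ½π₍ᵢ₋₁₎)⋯(1 − ½π₀)` we have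
`pᵢ = L πᵢ R`. Orthogonality makes `πᵢ` absorb `L` on the right and `R` absorb `πᵢ` on the
left; moreover `R πⱼ = πⱼ` for `j > i`, so `πᵢ R` also absorbs `L`. These three absorption
laws alone give all four identities, in any monoid; the coefficient ½ plays no role. -/

/-- One step of the non-commutative Gram–Schmidt process:
`gs n π i = (1 − ½πₙ)⋯(1 − ½π₍ᵢ₊₁₎) · πᵢ · (1 − ½π₍ᵢ₋₁₎)⋯(1 − ½π₀)`,
where the factors in each product are taken with decreasing index from left to right. -/
def gs {V : Type*} [Ring V] [Algebra ℚ V] (n : ℕ) (π : ℕ → V) (i : ℕ) : V :=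
  (((List.range (n - i)).map (fun k => (1 : V) - ((2 : ℚ)⁻¹) • π (n - k))).prod)
    * π i *
  (((List.range i).map (fun k => (1 : V) - ((2 : ℚ)⁻¹) • π (i - 1 - k))).prod)

section Absorption

variable {M : Type*} [Monoid M]

theorem List.mul_prod_eq_self {x : M} {l : List M} (h : ∀ y ∈ l, x * y = x) :
    x * l.prod = x :=
  l.prod_induction (x * · = x) (fun a b ha hb => by rw [← mul_assoc, ha, hb]) (mul_one x) h

theorem List.prod_mul_eq_self {x : M} {l : List M} (h : ∀ y ∈ l, y * x = x) :
    l.prod * x = x :=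
  l.prod_induction (· * x = x) (fun a b ha hb => by rw [mul_assoc, hb, ha]) (one_mul x) h

end Absorption

section Sandwich

variable {M : Type*} [Monoid M] {e l r : M}

theorem IsIdempotentElem.mul_sandwich_mul (he : IsIdempotentElem e) (hl : e * l = e)
    (hr : r * e = e) : e * (l * e * r) * e = e := by
  rw [← mul_assoc, ← mul_assoc, hl, he.eq, mul_assoc, hr, he.eq]

theorem IsIdempotentElem.mul_sandwich (he : IsIdempotentElem e) (hl : e * l = e) :
    e * (l * e * r) = e * r := by
  rw [← mul_assoc, ← mul_assoc, hl, he.eq]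

theorem IsIdempotentElem.sandwich_mul_sandwich (he : IsIdempotentElem e) (hl : e * l = e)
    (hr : r * e = e) : l * e * r * e * (l * e * r) = l * e * r :=
  calc l * e * r * e * (l * e * r) = l * e * r * (e * (l * e * r)) := by simp only [mul_assoc]
    _ = l * e * (r * e) * r := by rw [he.mul_sandwich hl]; simp only [mul_assoc]
    _ = l * e * r := by rw [hr, mul_assoc l, he.eq]

theorem IsIdempotentElem.isIdempotentElem_sandwich (he : IsIdempotentElem e)
    (hr : r * e = e) (hrl : e * r * l = e * r) : IsIdempotentElem (l * e * r) :=
  calc l * e * r * (l * e * r) = l * (e * r * l) * e * r := by simp only [mul_assoc]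
    _ = l * e * (r * e) * r := by rw [hrl]; simp only [mul_assoc]
    _ = l * e * r := by rw [hr, mul_assoc l, he.eq]

theorem IsIdempotentElem.sandwich_equiv (he : IsIdempotentElem e) (hl : e * l = e)
    (hr : r * e = e) (hrl : e * r * l = e * r) :
    e * (l * e * r) * e = e ∧
      l * e * r * e * (l * e * r) = l * e * r ∧
      (l * e * r * e) * (e * (l * e * r)) = l * e * r ∧
      (e * (l * e * r)) * (l * e * r * e) = e := by
  set p := l * e * r
  have hp : IsIdempotentElem p := he.isIdempotentElem_sandwich hr hrl
  refine ⟨he.mul_sandwich_mul hl hr, he.sandwich_mul_sandwich hl hr, ?_, ?_⟩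
  · rw [← mul_assoc, mul_assoc p, he.eq]
    exact he.sandwich_mul_sandwich hl hr
  · rw [← mul_assoc, mul_assoc e, hp.eq]
    exact he.mul_sandwich_mul hl hr

end Sandwich

theorem mul_one_sub_smul_eq_self {R V : Type*} [CommSemiring R] [Ring V] [Algebra R V]
    {x a : V} (c : R) (h : x * a = 0) : x * (1 - c • a) = x := by
  rw [mul_sub, mul_one, mul_smul_comm, h, smul_zero, sub_zero]

theorem one_sub_smul_mul_eq_self {R V : Type*} [CommSemiring R] [Ring V] [Algebra R V]
    {x a : V} (c : R) (h : a * x = 0) : (1 - c • a) * x = x := by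
  rw [sub_mul, one_mul, smul_mul_assoc, h, smul_zero, sub_zero]

theorem stmt_2 {V : Type*} [Ring V] [Algebra ℚ V] (n : ℕ) (π : ℕ → V)
    (hidem : ∀ i, i ≤ n → π i * π i = π i)
    (horth : ∀ i j, i ≤ n → j ≤ n → i < j → π i * π j = 0) :
    ∀ i, i ≤ n →
      π i * gs n π i * π i = π i ∧
      gs n π i * π i * gs n π i = gs n π i ∧
      (gs n π i * π i) * (π i * gs n π i) = gs n π i ∧
      (π i * gs n π i) * (gs n π i * π i) = π i := by
  intro i hi
  set L := ((List.range (n - i)).map fun k => (1 : V) - (2 : ℚ)⁻¹ • π (n - k)).prod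
  set R := ((List.range i).map fun k => (1 : V) - (2 : ℚ)⁻¹ • π (i - 1 - k)).prod
  have hL : ∀ x : V, (∀ j, i < j → j ≤ n → x * π j = 0) → x * L = x := fun x hx =>
    List.mul_prod_eq_self <| List.forall_mem_map.2 fun k hk => by
      have := List.mem_range.1 hk
      exact mul_one_sub_smul_eq_self _ (hx _ (by omega) (by omega))
  have hR : ∀ j, i ≤ j → j ≤ n → R * π j = π j := fun j hij hj =>
    List.prod_mul_eq_self <| List.forall_mem_map.2 fun k hk => by
      have := List.mem_range.1 hk
      exact one_sub_smul_mul_eq_self _ (horth _ j (by omega) hj (by omega))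
  have hπL : π i * L = π i := hL _ fun j hij hj => horth i j hi hj hij
  have hπRL : π i * R * L = π i * R := hL _ fun j hij hj => by
    rw [mul_assoc, hR j hij.le hj, horth i j hi hj hij]
  exact IsIdempotentElem.sandwich_equiv (hidem i hi) hπL (hR i le_rfl hi) hπRL
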